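/- Let d ≥ 1, 𝒯 a d-cluster category over an algebraically closed field k, R a d-cluster tilting object of 𝒯, and X ∈ pr(R). Then X is maximal R[1]-rigid with respect to pr(R) if and only if X is a d-cluster tilting object of 𝒯. -/

import Mathlib

/-!
Formalization of results from "Relative rigid objects in triangulated categories"
by Fu–Geng–Liu.  Throughout, `C` is a Krull–Schmidt, Hom-finite, `k`-linear
triangulated category over an algebraically closed field `k` (Krull–Schmidt is
encoded as: Hom-finite over `k` together with idempotent completeness), with
suspension functor `⟦1⟧`.
-/

open CategoryTheory Limits Pretriangulated Opposite

universe w v u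

namespace RelRigid

variable {k : Type w} [Field k] [IsAlgClosed k]
variable {C : Type u} [Category.{v} C] [Preadditive C] [CategoryTheory.Linear k C]
  [HasZeroObject C] [HasShift C ℤ] [∀ n : ℤ, (shiftFunctor C n).Additive]
  [Pretriangulated C] [HasFiniteBiproducts C] [IsIdempotentComplete C]
  [∀ X Y : C, Module.Finite k (X ⟶ Y)]

/-- `X` belongs to `add R`: it is a direct summand of a finite direct sum of copies of `R`. -/
def InAdd (R X : C) : Prop :=
  ∃ (n : ℕ) (s : X ⟶ ⨁ (fun _ : Fin n => R)) (p : (⨁ (fun _ : Fin n => R)) ⟶ X),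
    s ≫ p = 𝟙 X

/-- `Y` is a direct summand of `X`. -/
def IsSummand (Y X : C) : Prop := ∃ (s : Y ⟶ X) (p : X ⟶ Y), s ≫ p = 𝟙 Y

/-- The morphism `f` factors through `add Z`. -/
def FactorsThroughAdd (Z : C) {X Y : C} (f : X ⟶ Y) : Prop :=
  ∃ (Z' : C) (_ : InAdd Z Z') (g : X ⟶ Z') (h : Z' ⟶ Y), g ≫ h = f

/-- `X` is rigid: `Hom(X, X[1]) = 0`. -/
def IsRigidObj (X : C) : Prop := ∀ f : X ⟶ X⟦(1 : ℤ)⟧, f = 0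

/-- `X` is `R[1]`-rigid: `R[1](X, X[1]) = 0`, i.e. every morphism `X ⟶ X[1]`
factoring through `add (R[1])` vanishes. -/
def IsRelRigid (R X : C) : Prop :=
  ∀ f : X ⟶ X⟦(1 : ℤ)⟧, FactorsThroughAdd (R⟦(1 : ℤ)⟧) f → f = 0

/-- `X ∈ pr(R)`: there is a triangle `R₁ ⟶ R₀ ⟶ X ⟶ R₁[1]` with `R₀, R₁ ∈ add R`. -/
def InPr (R X : C) : Prop :=
  ∃ (R₁ R₀ : C) (_ : InAdd R R₁) (_ : InAdd R R₀) (f : R₁ ⟶ R₀) (g : R₀ ⟶ X)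
    (h : X ⟶ R₁⟦(1 : ℤ)⟧), Triangle.mk f g h ∈ distTriang C

/-- `X` is maximal `R[1]`-rigid with respect to `pr(R)`: `X ∈ pr(R)` is `R[1]`-rigid and
any `Z ∈ pr(R)` with `R[1](X ⊕ Z, (X ⊕ Z)[1]) = 0` satisfies `Z ∈ add X`. -/
def IsMaxRelRigid (R X : C) : Prop :=
  InPr R X ∧ IsRelRigid R X ∧ ∀ Z : C, InPr R Z → IsRelRigid R (X ⊞ Z) → InAdd X Z

/-- `X` is indecomposable. -/
def Indecomp (X : C) : Prop :=
  ¬ IsZero X ∧ ∀ A B : C, Nonempty (X ≅ A ⊞ B) → IsZero A ∨ IsZero B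

/-- `f` is a decomposition of `X` into indecomposable objects. -/
def IsDecomp (X : C) {n : ℕ} (f : Fin n → C) : Prop :=
  (∀ i, Indecomp (f i)) ∧ Nonempty (X ≅ ⨁ f)

/-- `|X| = n`: `X` has exactly `n` pairwise non-isomorphic indecomposable direct summands. -/
def NumIndec (X : C) (n : ℕ) : Prop :=
  ∃ g : Fin n → C, (∀ i, Indecomp (g i)) ∧ (∀ i j : Fin n, Nonempty (g i ≅ g j) → i = j) ∧
    ∀ Y : C, Indecomp Y → (IsSummand Y X ↔ ∃ i : Fin n, Nonempty (Y ≅ g i))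

/-- `X` is basic: it decomposes into pairwise non-isomorphic indecomposable objects. -/
def IsBasic (X : C) : Prop :=
  ∃ (n : ℕ) (f : Fin n → C), IsDecomp X f ∧ ∀ i j : Fin n, Nonempty (f i ≅ f j) → i = j

/-- `Hom(R, Y)` is a left module over `End (op R)` (equivalently, a right module over the
endomorphism algebra `Γ = End R`), via precomposition. -/
instance homModule (R Y : C) : Module (End (op R)) (R ⟶ Y) where
  smul g f := g.unop ≫ f
  one_smul f := by show (1 : End (op R)).unop ≫ f = f; simp [End.one_def]
  mul_smul g h f := by
    show (g * h).unop ≫ f = g.unop ≫ h.unop ≫ f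
    simp [End.mul_def]
  smul_zero g := by show g.unop ≫ (0 : _ ⟶ _) = 0; simp
  smul_add g f₁ f₂ := by
    show g.unop ≫ (f₁ + f₂) = g.unop ≫ f₁ + g.unop ≫ f₂
    simp
  add_smul g h f := by
    show (g + h).unop ≫ f = g.unop ≫ f + h.unop ≫ f
    rw [show (g + h).unop = g.unop + h.unop from rfl, Preadditive.add_comp]
  zero_smul f := by show (0 : End (op R)).unop ≫ f = 0; simp

/-- Postcomposition `Hom(R, X) → Hom(R, Y)` with `φ : X ⟶ Y`, i.e. the action of the
functor `Hom(R, −)` on morphisms; it is linear over `End (op R)`. -/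
def homMap (R : C) {X Y : C} (φ : X ⟶ Y) : (R ⟶ X) →ₗ[End (op R)] (R ⟶ Y) where
  toFun u := u ≫ φ
  map_add' u v := by simp [Preadditive.add_comp]
  map_smul' g u := by
    show (g.unop ≫ u) ≫ φ = g.unop ≫ (u ≫ φ)
    simp [Category.assoc]

/-- `T` is a cluster tilting object:
`add T = {X : Hom(T, X[1]) = 0} = {X : Hom(X, T[1]) = 0}`. -/
def IsClusterTilting (T : C) : Prop :=
  (∀ X : C, InAdd T X ↔ ∀ f : T ⟶ X⟦(1 : ℤ)⟧, f = 0) ∧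
  (∀ X : C, InAdd T X ↔ ∀ f : X ⟶ T⟦(1 : ℤ)⟧, f = 0)

/-- `T` is maximal `R[1]`-rigid with respect to the whole category `C`. -/
def IsMaxRelRigidAll (R T : C) : Prop :=
  IsRelRigid R T ∧ ∀ Z : C, IsRelRigid R (T ⊞ Z) → InAdd T Z

/-- `T` is `R[1]`-cluster tilting: `T` is `R[1]`-rigid and `|T| = |R|`. -/
def IsRelClusterTilting (R T : C) : Prop :=
  IsRelRigid R T ∧ ∃ n : ℕ, NumIndec T n ∧ NumIndec R n

/-- `S` is presilting: `Hom(S, S[i]) = 0` for all `i > 0`. -/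
def IsPresilting (S : C) : Prop := ∀ i : ℤ, 0 < i → ∀ f : S ⟶ S⟦i⟧, f = 0

/-- A predicate on objects defines a thick subcategory: closed under isomorphisms,
shifts, extensions (cones) and direct summands. -/
def IsThickClosed (P : C → Prop) : Prop :=
  (∀ X Y : C, (X ≅ Y) → P X → P Y) ∧
  (∀ (X : C) (n : ℤ), P X → P (X⟦n⟧)) ∧
  (∀ T : Triangle C, T ∈ (distTriang C) → P T.obj₁ → P T.obj₂ → P T.obj₃) ∧
  (∀ X Y : C, IsSummand Y X → P X → P Y)

/-- The smallest thick subcategory of `C` containing `S` is `C` itself. -/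
def ThickGenerates (S : C) : Prop :=
  ∀ P : C → Prop, IsThickClosed P → P S → ∀ X : C, P X

/-- `S` is silting: presilting and `thick S = C`. -/
def IsSilting (S : C) : Prop := IsPresilting S ∧ ThickGenerates S

/-- `C` is `n`-Calabi–Yau: there are bifunctorial isomorphisms
`Hom(X, Y) ≅ D Hom(Y, X[n])`, encoded by a perfect pairing
`Hom(X, Y) × Hom(Y, X[n]) → k` which is natural in both variables. -/
def IsCalabiYau (n : ℤ) : Prop :=
  ∃ pair : ∀ X Y : C, (X ⟶ Y) →ₗ[k] ((Y ⟶ X⟦n⟧) →ₗ[k] k),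
    (∀ X Y : C, Function.Bijective (pair X Y)) ∧
    (∀ (X' X Y : C) (u : X' ⟶ X) (f : X ⟶ Y) (g : Y ⟶ X'⟦n⟧),
      pair X' Y (u ≫ f) g = pair X Y f (g ≫ (shiftFunctor C n).map u)) ∧
    (∀ (X Y Y' : C) (v : Y ⟶ Y') (f : X ⟶ Y) (g : Y' ⟶ X⟦n⟧),
      pair X Y' (f ≫ v) g = pair X Y f (v ≫ g))

/-- `T` is `d`-rigid: `Hom(T, T[i]) = 0` for `i = 1, …, d`. -/
def IsDRigid (d : ℤ) (T : C) : Prop := ∀ i : ℤ, 1 ≤ i → i ≤ d → ∀ f : T ⟶ T⟦i⟧, f = 0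

/-- `T` is maximal `d`-rigid. -/
def IsMaxDRigid (d : ℤ) (T : C) : Prop :=
  IsDRigid d T ∧ ∀ Z : C, IsDRigid d (T ⊞ Z) → InAdd T Z

/-- `T` is a `d`-cluster tilting object. -/
def IsDClusterTilting (d : ℤ) (T : C) : Prop :=
  IsDRigid d T ∧
  ∀ X : C, (∀ i : ℤ, 1 ≤ i → i ≤ d → ∀ f : T ⟶ X⟦i⟧, f = 0) → InAdd T X

/-- `X` is a maximal rigid object. -/
def IsMaxRigidObj (X : C) : Prop :=
  IsRigidObj X ∧ ∀ Z : C, IsRigidObj (X ⊞ Z) → InAdd X Z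

/-- The isomorphism setoid on objects of `C` satisfying a predicate `p`. -/
def objSetoid (p : C → Prop) : Setoid {X : C // p X} where
  r X Y := Nonempty (X.1 ≅ Y.1)
  iseqv := ⟨fun _ => ⟨Iso.refl _⟩, fun ⟨e⟩ => ⟨e.symm⟩, fun ⟨e⟩ ⟨f⟩ => ⟨e.trans f⟩⟩

section Modules

variable (Γ : Type w) [Ring Γ]

/-- `f, g` is a minimal projective presentation `P₁ → P₀ → M → 0`:
both `P`s are projective, the sequence is exact with `g` surjective, and the kernels of
`g` and `f` are superfluous submodules (which encodes minimality). -/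
def IsMinProjPres {P₁ P₀ M : Type w} [AddCommGroup P₁] [Module Γ P₁]
    [AddCommGroup P₀] [Module Γ P₀] [AddCommGroup M] [Module Γ M]
    (f : P₁ →ₗ[Γ] P₀) (g : P₀ →ₗ[Γ] M) : Prop :=
  Module.Projective Γ P₁ ∧ Module.Projective Γ P₀ ∧
  Function.Surjective g ∧ Function.Exact f g ∧
  (∀ K : Submodule Γ P₀, LinearMap.ker g ⊔ K = ⊤ → K = ⊤) ∧
  (∀ K : Submodule Γ P₁, LinearMap.ker f ⊔ K = ⊤ → K = ⊤)

/-- `M` is `τ`-rigid, via the Adachi–Iyama–Reiten criterion: for a minimal projective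
presentation `P₁ →f P₀ → M → 0`, the map `Hom(f, M) : Hom(P₀, M) → Hom(P₁, M)` is
surjective. -/
def IsTauRigid (M : Type w) [AddCommGroup M] [Module Γ M] : Prop :=
  ∀ (P₁ P₀ : Type w) [AddCommGroup P₁] [Module Γ P₁] [AddCommGroup P₀] [Module Γ P₀],
    ∀ (f : P₁ →ₗ[Γ] P₀) (g : P₀ →ₗ[Γ] M), IsMinProjPres Γ f g →
    Function.Surjective (fun h : P₀ →ₗ[Γ] M => h ∘ₗ f)

/-- `(M, P)` is a `τ`-rigid pair: `M ∈ mod Γ` is `τ`-rigid, `P` is finitely generated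
projective and `Hom(P, M) = 0`. -/
def IsTauRigidPair (M P : Type w) [AddCommGroup M] [Module Γ M]
    [AddCommGroup P] [Module Γ P] : Prop :=
  Module.Finite Γ M ∧ IsTauRigid Γ M ∧
  Module.Finite Γ P ∧ Module.Projective Γ P ∧ ∀ h : P →ₗ[Γ] M, h = 0

/-- A module is indecomposable. -/
def ModIndec (M : Type w) [AddCommGroup M] [Module Γ M] : Prop :=
  Nontrivial M ∧ ∀ A B : Submodule Γ M, IsCompl A B → A = ⊥ ∨ B = ⊥

/-- An internal decomposition into indecomposable submodules. -/
def IsModDecomp {M : Type w} [AddCommGroup M] [Module Γ M] {n : ℕ}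
    (f : Fin n → Submodule Γ M) : Prop :=
  DirectSum.IsInternal f ∧ ∀ i, ModIndec Γ (f i)

/-- `|M| = n`: `M` has exactly `n` non-isomorphic indecomposable direct summands. -/
def NumIndecMod (M : Type w) [AddCommGroup M] [Module Γ M] (n : ℕ) : Prop :=
  ∃ (m : ℕ) (f : Fin m → Submodule Γ M) (g : Fin n → Submodule Γ M),
    IsModDecomp Γ f ∧ (∀ i, ModIndec Γ (g i)) ∧
    (∀ i j : Fin n, Nonempty (g i ≃ₗ[Γ] g j) → i = j) ∧
    (∀ i : Fin m, ∃ j : Fin n, Nonempty (f i ≃ₗ[Γ] g j)) ∧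
    (∀ j : Fin n, ∃ i : Fin m, Nonempty (f i ≃ₗ[Γ] g j))

/-- `M` is basic: it decomposes into pairwise non-isomorphic indecomposable submodules. -/
def ModBasic (M : Type w) [AddCommGroup M] [Module Γ M] : Prop :=
  ∃ (n : ℕ) (f : Fin n → Submodule Γ M), IsModDecomp Γ f ∧
    ∀ i j : Fin n, Nonempty (f i ≃ₗ[Γ] f j) → i = j

/-- `(M, P)` is a support `τ`-tilting pair: a `τ`-rigid pair with `|M| + |P| = |Γ|`. -/
def IsSuppTauTiltingPair (M P : Type w) [AddCommGroup M] [Module Γ M]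
    [AddCommGroup P] [Module Γ P] : Prop :=
  IsTauRigidPair Γ M P ∧
  ∃ nM nP nΓ : ℕ, NumIndecMod Γ M nM ∧ NumIndecMod Γ P nP ∧ NumIndecMod Γ Γ nΓ ∧
    nM + nP = nΓ

/-- `M` is a support `τ`-tilting module. -/
def IsSuppTauTilting (M : Type w) [AddCommGroup M] [Module Γ M] : Prop :=
  ∃ P : ModuleCat.{w} Γ, ModBasic Γ P ∧ IsSuppTauTiltingPair Γ M P

/-- `M` has projective dimension at most `1`. -/
def PdLeOne (M : Type w) [AddCommGroup M] [Module Γ M] : Prop :=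
  ∃ (P₁ P₀ : ModuleCat.{w} Γ) (f : P₁ →ₗ[Γ] P₀) (g : ↥P₀ →ₗ[Γ] M),
    Module.Projective Γ P₁ ∧ Module.Projective Γ P₀ ∧
    Function.Injective f ∧ Function.Surjective g ∧ Function.Exact f g

/-- `Ext¹_Γ(M, M) = 0`: every self-extension of `M` splits. -/
def SelfExtSplit (M : Type w) [AddCommGroup M] [Module Γ M] : Prop :=
  ∀ (E : ModuleCat.{w} Γ) (i : M →ₗ[Γ] E) (p : ↥E →ₗ[Γ] M),
    Function.Injective i → Function.Surjective p → Function.Exact i p →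
    ∃ r : ↥E →ₗ[Γ] M, r ∘ₗ i = LinearMap.id

/-- `M` is a (basic) tilting module: `M ∈ mod Γ` is basic with `pd M ≤ 1`,
`Ext¹(M, M) = 0` and `|M| = |Γ|`. -/
def IsTiltingMod (M : Type w) [AddCommGroup M] [Module Γ M] : Prop :=
  Module.Finite Γ M ∧ ModBasic Γ M ∧ PdLeOne Γ M ∧ SelfExtSplit Γ M ∧
  ∃ n : ℕ, NumIndecMod Γ M n ∧ NumIndecMod Γ Γ n

/-- The linear-isomorphism setoid on modules satisfying a predicate `p`. -/
def modSetoid (p : ModuleCat.{w} Γ → Prop) : Setoid {M : ModuleCat.{w} Γ // p M} where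
  r M N := Nonempty (↥M.1 ≃ₗ[Γ] ↥N.1)
  iseqv := ⟨fun _ => ⟨LinearEquiv.refl Γ _⟩, fun ⟨e⟩ => ⟨e.symm⟩, fun ⟨e⟩ ⟨f⟩ => ⟨e.trans f⟩⟩

/-- The componentwise linear-isomorphism setoid on pairs of modules satisfying `p`. -/
def pairSetoid (p : ModuleCat.{w} Γ × ModuleCat.{w} Γ → Prop) :
    Setoid {Mp : ModuleCat.{w} Γ × ModuleCat.{w} Γ // p Mp} where
  r A B := Nonempty (↥A.1.1 ≃ₗ[Γ] ↥B.1.1) ∧ Nonempty (↥A.1.2 ≃ₗ[Γ] ↥B.1.2)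
  iseqv := ⟨fun _ => ⟨⟨LinearEquiv.refl Γ _⟩, ⟨LinearEquiv.refl Γ _⟩⟩,
    fun ⟨⟨e⟩, ⟨f⟩⟩ => ⟨⟨e.symm⟩, ⟨f.symm⟩⟩,
    fun ⟨⟨e⟩, ⟨f⟩⟩ ⟨⟨e'⟩, ⟨f'⟩⟩ => ⟨⟨e.trans e'⟩, ⟨f.trans f'⟩⟩⟩

/-- `(M, P)` is a basic `τ`-rigid pair. -/
def BasicTauRigidPair (Mp : ModuleCat.{w} Γ × ModuleCat.{w} Γ) : Prop :=
  IsTauRigidPair Γ ↥Mp.1 ↥Mp.2 ∧ ModBasic Γ ↥Mp.1 ∧ ModBasic Γ ↥Mp.2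

end Modules

end RelRigid

/-!
For a `d`-cluster tilting `R`, `pr(R)` consists of the `Z` with `Hom(R, Z[i]) = 0` for
`0 < i < d`: the cone of a right `add R`-approximation of such a `Z` lies in `add R[1]`.

Let `X ∈ pr(R)` be `R[1]`-rigid, presented by `R₁ → R₀ → X → R₁[1]`. A morphism `X → X[1]`
vanishing on `R₀` factors through `R₁[1]`, hence is zero. Every morphism `X → X[1]` does vanish
on `R₀`: for `d ≥ 2` because `Hom(R₀, X[1]) = 0`, and for `d = 1` because the `2`-Calabi–Yau
pairing turns the question into one about composites `X[1] → R₀[2] → X[2]`, which `R[1]`-rigidity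
kills. So `X` is rigid, and long exact sequences plus `(d+1)`-Calabi–Yau duality make it
`d`-rigid. Hence a maximal `d`-rigid `X ∈ pr(R)` is maximal `R[1]`-rigid in `pr(R)`.

Conversely, let `X` be maximal `R[1]`-rigid in `pr(R)`. The cone `E` of a left
`add X`-approximation `R → X₀` lies in `pr(R)` and `X ⊕ E` is `R[1]`-rigid, so `E ∈ add X`.
If `X ⊕ Z` is `d`-rigid, the triangle `X₀ → E → R[1] → X₀[1]` gives `Hom(R, Z[i]) = 0` for
`0 < i < d`, so `Z ∈ pr(R)`, and `Z ∈ add X` by maximality: `X` is maximal `d`-rigid.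
-/

namespace RelRigid

section Preadditive

variable {C : Type u} [Category.{v} C] [Preadditive C]

def HomZero (A B : C) : Prop := ∀ f : A ⟶ B, f = 0

lemma HomZero.of_retract_left {A A' B : C} (h : HomZero A B) (e : Retract A' A) :
    HomZero A' B := fun f => by
  rw [← Category.id_comp f, ← e.retract, Category.assoc, h (e.r ≫ f), comp_zero]

lemma HomZero.of_retract_right {A B B' : C} (h : HomZero A B) (e : Retract B' B) :
    HomZero A B' := fun f => by
  rw [← Category.comp_id f, ← e.retract, ← Category.assoc, h (f ≫ e.i), zero_comp]

lemma homZero_iso_right_iff {A B B' : C} (e : B ≅ B') : HomZero A B ↔ HomZero A B' :=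
  ⟨fun h => h.of_retract_right (Retract.ofIso e.symm),
    fun h => h.of_retract_right (Retract.ofIso e)⟩

lemma homZero_map_iff {D : Type*} [Category D] [Preadditive D] (F : C ⥤ D) [F.Full] [F.Faithful]
    [F.PreservesZeroMorphisms] {A B : C} : HomZero (F.obj A) (F.obj B) ↔ HomZero A B :=
  ⟨fun h f => F.map_injective (by rw [h (F.map f), F.map_zero]),
    fun h f => by obtain ⟨g, rfl⟩ := F.map_surjective f; rw [h g, F.map_zero]⟩

lemma eq_zero_of_comp_map_biprod {D : Type*} [Category D] [Preadditive D] (F : C ⥤ D) [F.Additive]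
    [HasBinaryBiproducts C] {A : D} {X Y : C} (t : A ⟶ F.obj (X ⊞ Y))
    (h₁ : t ≫ F.map biprod.fst = 0) (h₂ : t ≫ F.map biprod.snd = 0) : t = 0 := by
  rw [← Category.comp_id t, ← F.map_id, ← biprod.total, F.map_add, F.map_comp, F.map_comp,
    Preadditive.comp_add, ← Category.assoc, ← Category.assoc, h₁, h₂, zero_comp, zero_comp,
    add_zero]

lemma HomZero.map_biprod {D : Type*} [Category D] [Preadditive D] (F : C ⥤ D) [F.Additive]
    [HasBinaryBiproducts C] {A : D} {X Y : C} (hX : HomZero A (F.obj X))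
    (hY : HomZero A (F.obj Y)) : HomZero A (F.obj (X ⊞ Y)) :=
  fun t => eq_zero_of_comp_map_biprod F t (hX _) (hY _)

variable [HasFiniteBiproducts C]

lemma inAdd_self (P : C) : InAdd P P :=
  ⟨1, biproduct.ι (fun _ : Fin 1 => P) 0, biproduct.π _ 0, biproduct.ι_π_self _ _⟩

lemma inAdd_biproduct (P : C) (n : ℕ) : InAdd P (⨁ fun _ : Fin n => P) :=
  ⟨n, 𝟙 _, 𝟙 _, Category.comp_id _⟩

lemma InAdd.map {D : Type*} [Category D] [Preadditive D] [HasFiniteBiproducts D] (F : C ⥤ D)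
    [F.Additive] {P B : C} (h : InAdd P B) : InAdd (F.obj P) (F.obj B) := by
  obtain ⟨n, s, p, hsp⟩ := h
  exact ⟨n, F.map s ≫ (F.mapBiproduct _).hom, (F.mapBiproduct _).inv ≫ F.map p,
    by rw [Category.assoc, Iso.hom_inv_id_assoc, ← F.map_comp, hsp, F.map_id]⟩

lemma HomZero.of_inAdd_right {A P B : C} (h : HomZero A P) (hB : InAdd P B) : HomZero A B := by
  obtain ⟨n, s, p, hsp⟩ := hB
  have hsum : HomZero A (⨁ fun _ : Fin n => P) := fun f =>
    biproduct.hom_ext _ _ fun j => by rw [zero_comp]; exact h _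
  exact hsum.of_retract_right ⟨s, p, hsp⟩

lemma HomZero.of_inAdd_left {A P B : C} (h : HomZero P A) (hB : InAdd P B) : HomZero B A := by
  obtain ⟨n, s, p, hsp⟩ := hB
  have hsum : HomZero (⨁ fun _ : Fin n => P) A := fun f =>
    biproduct.hom_ext' _ _ fun j => by rw [comp_zero]; exact h _
  exact hsum.of_retract_left ⟨s, p, hsp⟩

lemma FactorsThroughAdd.whisker {P A B A' B' : C} {f : A ⟶ B} (h : FactorsThroughAdd P f)
    (l : A' ⟶ A) (r : B ⟶ B') : FactorsThroughAdd P (l ≫ f ≫ r) := by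
  obtain ⟨Q, hQ, g, g', rfl⟩ := h
  exact ⟨Q, hQ, l ≫ g, g' ≫ r, by simp⟩

end Preadditive

section Shift

variable {C : Type u} [Category.{v} C] [Preadditive C] [HasShift C ℤ]

lemma homZero_shift_shift_iff {A B : C} {a b c : ℤ} (h : a + b = c) :
    HomZero A ((B⟦a⟧)⟦b⟧) ↔ HomZero A (B⟦c⟧) :=
  homZero_iso_right_iff ((shiftFunctorAdd' C a b c h).app B).symm

variable [∀ n : ℤ, (shiftFunctor C n).Additive]

lemma comp_shift_map_eq_zero {A Y Y' : C} (b : Y ⟶ Y') {a a' c : ℤ} (h : a + a' = c)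
    (hb : ∀ g : A ⟶ Y⟦a⟧, g ≫ b⟦a⟧' = 0) (g : A⟦a'⟧ ⟶ Y⟦c⟧) : g ≫ b⟦c⟧' = 0 := by
  let η := shiftFunctorAdd' C a a' c h
  obtain ⟨g₀, hg₀⟩ := (shiftFunctor C a').map_surjective (g ≫ η.hom.app Y)
  rw [← cancel_mono (η.hom.app Y'), Category.assoc, η.hom.naturality b, ← Category.assoc,
    ← hg₀, zero_comp, Functor.comp_map, ← Functor.map_comp, hb g₀, Functor.map_zero]

end Shift

section CalabiYau

variable {k : Type*} [Field k] {C : Type u} [Category.{v} C] [Preadditive C] [Linear k C]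
  [HasShift C ℤ] {n : ℤ}

lemma homZero_iff_of_isCalabiYau (hCY : IsCalabiYau (k := k) (C := C) n) (A B : C) :
    HomZero A B ↔ HomZero B (A⟦n⟧) := by
  obtain ⟨pair, hbij, -, -⟩ := hCY
  refine ⟨fun h g => (Module.forall_dual_apply_eq_zero_iff k g).mp fun φ => ?_, fun h f => ?_⟩
  · obtain ⟨f, rfl⟩ := (hbij A B).2 φ
    rw [h f, map_zero, LinearMap.zero_apply]
  · refine (hbij A B).1 ?_
    rw [map_zero]
    ext g
    rw [h g, map_zero, LinearMap.zero_apply]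

lemma comp_eq_zero_of_isCalabiYau (hCY : IsCalabiYau (k := k) (C := C) n) {Z X W : C}
    (b : Z ⟶ X) (f : X ⟶ W) (h : ∀ g : W ⟶ Z⟦n⟧, g ≫ b⟦n⟧' = 0) : b ≫ f = 0 := by
  obtain ⟨pair, hbij, hnat, -⟩ := hCY
  refine (hbij Z W).1 ?_
  ext g
  rw [hnat, h g, map_zero, map_zero, LinearMap.zero_apply]

variable [∀ n : ℤ, (shiftFunctor C n).Additive]

lemma homZero_shift_iff_of_isCalabiYau (hCY : IsCalabiYau (k := k) (C := C) n) {A B : C}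
    {i j : ℤ} (h : j + i = n) : HomZero A (B⟦i⟧) ↔ HomZero B (A⟦j⟧) := by
  rw [homZero_iff_of_isCalabiYau hCY, ← homZero_shift_shift_iff h,
    homZero_map_iff (shiftFunctor C i)]

end CalabiYau

section Triangles

variable {C : Type u} [Category.{v} C] [Preadditive C] [HasZeroObject C] [HasShift C ℤ]
  [∀ n : ℤ, (shiftFunctor C n).Additive] [Pretriangulated C]

lemma Triangle.coyoneda_exact₃_shift {T : Triangle C} (hT : T ∈ distTriang C) (m : ℤ) {W : C}
    (f : W ⟶ T.obj₃⟦m⟧) (hf : f ≫ T.mor₃⟦m⟧' = 0) : ∃ g : W ⟶ T.obj₂⟦m⟧, f = g ≫ T.mor₂⟦m⟧' := by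
  obtain ⟨g, hg⟩ := Triangle.coyoneda_exact₃ _ (Triangle.shift_distinguished T hT m) f (by
    change f ≫ (m.negOnePow • (T.mor₃⟦m⟧' ≫ (shiftFunctorComm C 1 m).hom.app T.obj₁)) = 0
    rw [Linear.comp_units_smul, ← Category.assoc, hf, zero_comp, smul_zero])
  change f = g ≫ (m.negOnePow • T.mor₂⟦m⟧') at hg
  exact ⟨m.negOnePow • g,
    hg.trans ((Linear.comp_units_smul _ _ _).trans (Linear.units_smul_comp _ _ _).symm)⟩

lemma homZero_shift_obj₃_of_distTriang {T : Triangle C} (hT : T ∈ distTriang C) (m : ℤ) {W : C}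
    (h₂ : HomZero W (T.obj₂⟦m⟧)) (h₁ : HomZero W ((T.obj₁⟦(1 : ℤ)⟧)⟦m⟧)) :
    HomZero W (T.obj₃⟦m⟧) := fun f => by
  obtain ⟨g, rfl⟩ := Triangle.coyoneda_exact₃_shift hT m f (h₁ _)
  rw [h₂ g, zero_comp]

lemma homZero_obj₃_of_distTriang {T : Triangle C} (hT : T ∈ distTriang C) {W : C}
    (h₂ : HomZero T.obj₂ W) (h₁ : HomZero (T.obj₁⟦(1 : ℤ)⟧) W) : HomZero T.obj₃ W := fun f => by
  obtain ⟨g, rfl⟩ := Triangle.yoneda_exact₃ _ hT f (h₂ _)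
  rw [h₁ g, comp_zero]

lemma homZero_shift_of_left_approximation {R X₀ E X : C} {v : R ⟶ X₀} {w : X₀ ⟶ E}
    {e : E ⟶ R⟦(1 : ℤ)⟧} (hT : Triangle.mk v w e ∈ distTriang C)
    (hv : ∀ φ : R ⟶ X, ∃ ψ : X₀ ⟶ X, v ≫ ψ = φ) (hX₀ : HomZero X₀ (X⟦(1 : ℤ)⟧)) :
    HomZero E (X⟦(1 : ℤ)⟧) := fun f => by
  obtain ⟨g, rfl⟩ := Triangle.yoneda_exact₃ _ hT f (hX₀ _)
  obtain ⟨φ, rfl⟩ := (shiftFunctor C 1).map_surjective g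
  obtain ⟨ψ, rfl⟩ := hv φ
  change e ≫ (v ≫ ψ)⟦(1 : ℤ)⟧' = 0
  rw [Functor.map_comp, ← Category.assoc,
    show e ≫ v⟦(1 : ℤ)⟧' = 0 from comp_distTriang_mor_zero₃₁ _ hT, zero_comp]

end Triangles

section Approximations

variable {C : Type u} [Category.{v} C] [Preadditive C] [HasFiniteBiproducts C]
  (k : Type*) [Field k] [Linear k C] [∀ X Y : C, Module.Finite k (X ⟶ Y)]

include k in
lemma exists_right_approximation (R Z : C) : ∃ (m : ℕ) (b : (⨁ fun _ : Fin m => R) ⟶ Z),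
    ∀ φ : R ⟶ Z, ∃ ρ : R ⟶ ⨁ fun _ : Fin m => R, ρ ≫ b = φ := by
  let bs := Module.finBasis k (R ⟶ Z)
  refine ⟨Module.finrank k (R ⟶ Z), biproduct.desc fun j => bs j,
    fun φ => ⟨biproduct.lift fun j => bs.repr φ j • 𝟙 R, ?_⟩⟩
  simp only [biproduct.lift_desc, Linear.smul_comp, Category.id_comp]
  exact bs.sum_repr φ

include k in
lemma exists_left_approximation (R X : C) : ∃ (m : ℕ) (v : R ⟶ ⨁ fun _ : Fin m => X),
    ∀ φ : R ⟶ X, ∃ ψ : (⨁ fun _ : Fin m => X) ⟶ X, v ≫ ψ = φ := by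
  let bs := Module.finBasis k (R ⟶ X)
  refine ⟨Module.finrank k (R ⟶ X), biproduct.lift fun j => bs j,
    fun φ => ⟨biproduct.desc fun j => bs.repr φ j • 𝟙 X, ?_⟩⟩
  simp only [biproduct.lift_desc, Linear.comp_smul, Category.comp_id]
  exact bs.sum_repr φ

end Approximations

section RelativeRigidity

variable {C : Type u} [Category.{v} C] [Preadditive C] [HasShift C ℤ]
  [∀ n : ℤ, (shiftFunctor C n).Additive] [HasFiniteBiproducts C]

/-- `R[1](A, B[1]) = 0`. -/
def RelHomZero (R A B : C) : Prop :=
  ∀ f : A ⟶ B⟦(1 : ℤ)⟧, FactorsThroughAdd (R⟦(1 : ℤ)⟧) f → f = 0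

lemma isRelRigid_biprod [HasBinaryBiproducts C] {R X Y : C} (hXX : RelHomZero R X X)
    (hXY : RelHomZero R X Y) (hYX : RelHomZero R Y X) (hYY : RelHomZero R Y Y) :
    IsRelRigid R (X ⊞ Y) := by
  intro f hf
  have hfac : ∀ {A B : C} (l : A ⟶ X ⊞ Y) (r : X ⊞ Y ⟶ B),
      FactorsThroughAdd (R⟦(1 : ℤ)⟧) (l ≫ f ≫ r⟦(1 : ℤ)⟧') := fun l r => hf.whisker l _
  apply biprod.hom_ext' <;> rw [comp_zero] <;> apply eq_zero_of_comp_map_biprod <;>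
    rw [Category.assoc]
  exacts [hXX _ (hfac _ _), hXY _ (hfac _ _), hYX _ (hfac _ _), hYY _ (hfac _ _)]

lemma IsDRigid.homZero_shift_of_inAdd {d : ℤ} {R : C} (hR : IsDRigid d R) {i : ℤ} (hi : 1 ≤ i)
    (hid : i ≤ d) {A B : C} (hA : InAdd R A) (hB : InAdd R B) : HomZero A (B⟦i⟧) :=
  (HomZero.of_inAdd_right (hR i hi hid) (hB.map _)).of_inAdd_left hA

end RelativeRigidity

section ProjectivelyPresented

variable {C : Type u} [Category.{v} C] [Preadditive C] [HasZeroObject C] [HasShift C ℤ]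
  [∀ n : ℤ, (shiftFunctor C n).Additive] [Pretriangulated C] [HasFiniteBiproducts C]
  {d : ℤ} {R : C}

lemma homZero_shift_of_inPr (hR : IsDRigid d R) {A Z : C} (hA : InAdd R A) (hZ : InPr R Z)
    {i : ℤ} (hi : 1 ≤ i) (hid : i ≤ d - 1) : HomZero A (Z⟦i⟧) := by
  obtain ⟨R₁, R₀, hR₁, hR₀, a, b, c, hT⟩ := hZ
  exact homZero_shift_obj₃_of_distTriang hT i (hR.homZero_shift_of_inAdd hi (by omega) hA hR₀)
    ((homZero_shift_shift_iff rfl).2 (hR.homZero_shift_of_inAdd (by omega) (by omega) hA hR₁))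

lemma relHomZero_of_distTriang {X₀ E A : C} {v : R ⟶ X₀} {w : X₀ ⟶ E} {e : E ⟶ R⟦(1 : ℤ)⟧}
    (hT : Triangle.mk v w e ∈ distTriang C) (hR : HomZero R (R⟦(1 : ℤ)⟧))
    (hA : HomZero A (X₀⟦(1 : ℤ)⟧)) : RelHomZero R A E := by
  rintro f ⟨Q, hQ, g, h, rfl⟩
  have hR' : HomZero Q ((R⟦(1 : ℤ)⟧)⟦(1 : ℤ)⟧) :=
    ((homZero_map_iff (shiftFunctor C 1)).2 hR).of_inAdd_left hQ
  obtain ⟨f', hf'⟩ := Triangle.coyoneda_exact₃_shift hT 1 (g ≫ h)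
    (by change (g ≫ h) ≫ e⟦(1 : ℤ)⟧' = 0; rw [Category.assoc, hR' (h ≫ _), comp_zero])
  exact hf'.trans (by rw [hA f']; exact zero_comp)

section HomFinite

variable (k : Type*) [Field k] [Linear k C] [∀ X Y : C, Module.Finite k (X ⟶ Y)]

include k in
lemma inPr_of_homZero_shift (hd : 1 ≤ d) (hR : IsDClusterTilting d R) {Z : C}
    (hZ : ∀ i : ℤ, 1 ≤ i → i ≤ d - 1 → HomZero R (Z⟦i⟧)) : InPr R Z := by
  obtain ⟨m, b, hb⟩ := exists_right_approximation k R Z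
  obtain ⟨W, g, h, hT⟩ := distinguished_cocone_triangle b
  have hRm := inAdd_biproduct R m
  have hRRm : ∀ j : ℤ, 1 ≤ j → j ≤ d → HomZero R ((⨁ fun _ : Fin m => R)⟦j⟧) :=
    fun j hj hjd => HomZero.of_inAdd_right (hR.1 j hj hjd) (hRm.map _)
  have hW : ∀ j : ℤ, 0 ≤ j → j ≤ d - 1 → HomZero R (W⟦j⟧) := by
    intro j hj hjd
    obtain rfl | hj := hj.eq_or_lt
    · refine (homZero_iso_right_iff ((shiftFunctorZero C ℤ).app W).symm).1 fun f => ?_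
      obtain ⟨f', rfl⟩ := Triangle.coyoneda_exact₃ _ hT f (hRRm 1 le_rfl hd _)
      obtain ⟨ρ, rfl⟩ := hb f'
      change (ρ ≫ b) ≫ g = 0
      rw [Category.assoc, show b ≫ g = 0 from comp_distTriang_mor_zero₁₂ _ hT, comp_zero]
    · exact homZero_shift_obj₃_of_distTriang hT j (hZ j hj hjd)
        ((homZero_shift_shift_iff rfl).2 (hRRm (1 + j) (by omega) (by omega)))
  have hW' : InAdd R (W⟦(-1 : ℤ)⟧) := hR.2 _ fun i hi hid =>
    (homZero_shift_shift_iff (show -1 + i = i - 1 by omega)).2 (hW (i - 1) (by omega) (by omega))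
  exact ⟨_, _, hW', hRm, _, _, _, inv_rot_of_distTriang _ hT⟩

include k in
lemma inPr_iff_homZero_shift (hd : 1 ≤ d) (hR : IsDClusterTilting d R) (Z : C) :
    InPr R Z ↔ ∀ i : ℤ, 1 ≤ i → i ≤ d - 1 → HomZero R (Z⟦i⟧) :=
  ⟨fun hZ _ hi hid => homZero_shift_of_inPr hR.1 (inAdd_self R) hZ hi hid,
    inPr_of_homZero_shift k hd hR⟩

include k in
lemma exists_isRelRigid_biprod_cone (hd : 1 ≤ d) (hR : IsDRigid d R) {X : C}
    (hRX : ∀ i : ℤ, 1 ≤ i → i ≤ d - 1 → HomZero R (X⟦i⟧)) (hX : HomZero X (X⟦(1 : ℤ)⟧))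
    (hrel : IsRelRigid R X) :
    ∃ (E X₀ : C) (v : R ⟶ X₀) (w : X₀ ⟶ E) (e : E ⟶ R⟦(1 : ℤ)⟧), InAdd X X₀ ∧
      Triangle.mk v w e ∈ distTriang C ∧ (∀ i : ℤ, 1 ≤ i → i ≤ d - 1 → HomZero R (E⟦i⟧)) ∧
      IsRelRigid R (X ⊞ E) := by
  obtain ⟨m, v, hv⟩ := exists_left_approximation k R X
  obtain ⟨E, w, e, hT⟩ := distinguished_cocone_triangle v
  have hX₀ := inAdd_biproduct X m
  have hEX := homZero_shift_of_left_approximation hT hv (hX.of_inAdd_left hX₀)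
  have hR₁ : HomZero R (R⟦(1 : ℤ)⟧) := hR 1 le_rfl hd
  refine ⟨E, _, v, w, e, hX₀, hT, fun i hi hid => ?_, isRelRigid_biprod hrel
    (relHomZero_of_distTriang hT hR₁ (hX.of_inAdd_right (hX₀.map _))) (fun f _ => hEX f)
    (relHomZero_of_distTriang hT hR₁ (hEX.of_inAdd_right (hX₀.map _)))⟩
  exact homZero_shift_obj₃_of_distTriang hT i ((hRX i hi hid).of_inAdd_right (hX₀.map _))
    ((homZero_shift_shift_iff rfl).2 (hR (1 + i) (by omega) (by omega)))

end HomFinite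

section CalabiYau

variable {k : Type*} [Field k] [Linear k C]

lemma homZero_shift_one_of_isRelRigid (hd : 1 ≤ d) (hCY : IsCalabiYau (k := k) (C := C) (d + 1))
    (hR : IsDRigid d R) {X : C} (hX : InPr R X) (hrel : IsRelRigid R X) :
    HomZero X (X⟦(1 : ℤ)⟧) := by
  obtain ⟨R₁, R₀, hR₁, hR₀, a, b, c, hT⟩ := id hX
  intro f
  have hbf : b ≫ f = 0 := by
    obtain rfl | hd := hd.eq_or_lt
    · refine comp_eq_zero_of_isCalabiYau hCY b f (comp_shift_map_eq_zero b rfl fun g => ?_)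
      exact hrel _ ⟨R₀⟦(1 : ℤ)⟧, hR₀.map _, g, b⟦(1 : ℤ)⟧', rfl⟩
    · exact homZero_shift_of_inPr hR hR₀ hX le_rfl (by omega) _
  obtain ⟨g, rfl⟩ := Triangle.yoneda_exact₃ _ hT f hbf
  exact hrel _ ⟨R₁⟦(1 : ℤ)⟧, hR₁.map _, c, g, rfl⟩

lemma isDRigid_of_isRelRigid (hd : 1 ≤ d) (hCY : IsCalabiYau (k := k) (C := C) (d + 1))
    (hR : IsDRigid d R) {X : C} (hX : InPr R X) (hrel : IsRelRigid R X) : IsDRigid d X := by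
  have h₁ := homZero_shift_one_of_isRelRigid hd hCY hR hX hrel
  intro i hi hid
  obtain rfl | hi := hi.eq_or_lt
  · exact h₁
  obtain rfl | hid := hid.eq_or_lt
  · exact (homZero_shift_iff_of_isCalabiYau hCY (by omega)).2 h₁
  obtain ⟨R₁, R₀, hR₁, hR₀, a, b, c, hT⟩ := id hX
  refine homZero_obj₃_of_distTriang hT (homZero_shift_of_inPr hR hR₀ hX (by omega) (by omega))
    ((homZero_shift_shift_iff (show i - 1 + 1 = i by omega)).1 ?_)
  exact (homZero_map_iff (shiftFunctor C 1)).2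
    (homZero_shift_of_inPr hR hR₁ hX (i := i - 1) (by omega) (by omega))

variable [∀ X Y : C, Module.Finite k (X ⟶ Y)]

lemma isMaxDRigid_of_isMaxRelRigid (hd : 1 ≤ d) (hCY : IsCalabiYau (k := k) (C := C) (d + 1))
    (hR : IsDClusterTilting d R) {X : C} (hX : IsMaxRelRigid R X) : IsMaxDRigid d X := by
  obtain ⟨hXpr, hXrel, hmax⟩ := hX
  have hpr := inPr_iff_homZero_shift k hd hR
  have hXd := isDRigid_of_isRelRigid hd hCY hR.1 hXpr hXrel
  obtain ⟨E, X₀, v, w, e, hX₀, hT, hE, hXE⟩ :=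
    exists_isRelRigid_biprod_cone k hd hR.1 ((hpr X).1 hXpr) (hXd 1 le_rfl hd) hXrel
  have hEX : InAdd X E := hmax E ((hpr E).2 hE) hXE
  refine ⟨hXd, fun Z hZ => hmax Z ((hpr Z).2 fun i hi hid => ?_) fun f _ => hZ 1 le_rfl hd f⟩
  have hXZ : ∀ j : ℤ, 1 ≤ j → j ≤ d → HomZero X (Z⟦j⟧) := fun j hj hjd =>
    (HomZero.of_retract_left (hZ j hj hjd) ⟨biprod.inl, biprod.fst, biprod.inl_fst⟩)
      |>.of_retract_right (Retract.map ⟨biprod.inr, biprod.snd, biprod.inr_snd⟩ (shiftFunctor C j))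
  refine (homZero_map_iff (shiftFunctor C 1)).1
    (homZero_obj₃_of_distTriang (rot_of_distTriang _ hT) ?_ ?_)
  · exact ((homZero_shift_shift_iff rfl).2 (hXZ (i + 1) (by omega) (by omega))).of_inAdd_left hEX
  · exact (homZero_map_iff (shiftFunctor C 1)).2 ((hXZ i hi (by omega)).of_inAdd_left hX₀)

lemma isMaxRelRigid_of_isMaxDRigid (hd : 1 ≤ d) (hCY : IsCalabiYau (k := k) (C := C) (d + 1))
    (hR : IsDClusterTilting d R) {X : C} (hX : InPr R X) (hXd : IsMaxDRigid d X) :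
    IsMaxRelRigid R X := by
  have hpr := inPr_iff_homZero_shift k hd hR
  refine ⟨hX, fun f _ => hXd.1 1 le_rfl hd f,
    fun Z hZ hXZ => hXd.2 Z (isDRigid_of_isRelRigid hd hCY hR.1 ?_ hXZ)⟩
  exact (hpr _).2 fun i hi hid =>
    HomZero.map_biprod _ ((hpr X).1 hX i hi hid) ((hpr Z).1 hZ i hi hid)

end CalabiYau

end ProjectivelyPresented

variable {k : Type w} [Field k] [IsAlgClosed k]
variable {C : Type u} [Category.{v} C] [Preadditive C] [CategoryTheory.Linear k C]
  [HasZeroObject C] [HasShift C ℤ] [∀ n : ℤ, (shiftFunctor C n).Additive]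
  [Pretriangulated C] [HasFiniteBiproducts C] [IsIdempotentComplete C]
  [∀ X Y : C, Module.Finite k (X ⟶ Y)]

theorem statement17_general (d : ℤ) (hd : 1 ≤ d)
    (hCY : IsCalabiYau (k := k) (C := C) (d + 1))
    (hdct : ∀ T : C, IsDClusterTilting d T ↔ IsMaxDRigid d T)
    (R : C) (hR : IsDClusterTilting d R) (X : C) (hX : InPr R X) :
    IsMaxRelRigid R X ↔ IsDClusterTilting d X := by
  rw [hdct X]
  exact ⟨isMaxDRigid_of_isMaxRelRigid hd hCY hR, isMaxRelRigid_of_isMaxDRigid hd hCY hR hX⟩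

/-- **Proposition 4.4.**  Let `C` be a `d`-cluster category (encoded by its defining
properties: a Krull–Schmidt, Hom-finite, `(d+1)`-Calabi–Yau triangulated category in
which `d`-cluster tilting objects coincide with maximal `d`-rigid objects and all have
the same number of non-isomorphic indecomposable direct summands), `R` a `d`-cluster
tilting object and `X ∈ pr(R)`.  Then `X` is maximal `R[1]`-rigid with respect to
`pr(R)` if and only if `X` is a `d`-cluster tilting object. -/
theorem statement17 (d : ℤ) (hd : 1 ≤ d)
    (hCY : IsCalabiYau (k := k) (C := C) (d + 1))
    (hdct : ∀ T : C, IsDClusterTilting d T ↔ IsMaxDRigid d T)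
    (hnum : ∀ T T' : C, IsDClusterTilting d T → IsDClusterTilting d T' →
      ∃ n : ℕ, NumIndec T n ∧ NumIndec T' n)
    (R : C) (hR : IsDClusterTilting d R) (X : C) (hX : InPr R X) :
    IsMaxRelRigid R X ↔ IsDClusterTilting d X :=
  statement17_general d hd hCY hdct R hR X hX

end RelRigid
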